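/- Let k be a field with char(k) ≠ 2, let c₁, c₂ ∈ kˣ be such that the quaternion algebra Q = (c₁,c₂)_k is a division ring, and let n be a natural number. Then there exists a finitely generated, transcendental field extension k ⊆ K (for instance K = k(x₁,…,x_n)) and elements a₁,…,a_n ∈ Kˣ such that the hermitian form b on (Q_K)ⁿ = Q_K × ⋯ × Q_K defined by b((q₁,…,q_n),(q'₁,…,q'_n)) = Σ_r a_r·q_r·(q'_r)̄ (where ̄ denotes quaternion conjugation and Q_K = (c₁,c₂)_K is the base change of Q to K) is anisotropic: b(q,q) = 0 implies q = 0. -/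

import Mathlib

/-!
Since `q * star q` is the reduced norm `N(q) = x₀² - c₁x₁² - c₂x₂² + c₁c₂x₃²`, a scalar, the
hermitian form is anisotropic as soon as the quadratic form `⟨a₁, …, aₙ⟩ ⊗ N` is. The norm form
is anisotropic over `k` because `Q` is a division ring. Over `K = k(t₀, t₁, …, tₙ)` take
`a_r = t_r` and adjoin the variables one at a time, using Springer's argument: if `φ` and `ψ` are
anisotropic over `F`, then so is `φ ⊥ X ψ` over `F(X)`, because after clearing denominators the
nonzero values of `φ` have even degree in `X` and those of `X ψ` odd degree. The extra variable
`t₀` is there to make `K / k` transcendental also when `n = 0`.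
-/

open Polynomial QuadraticMap
open scoped Quaternion

universe u

section WeightedSumSquares

variable {ι S A B : Type*} [Fintype ι] [CommSemiring S] [CommSemiring A] [CommSemiring B]
  [Algebra S A] [Algebra S B]

lemma AlgHom.map_weightedSumSquares (f : A →ₐ[S] B) (w : ι → S) (v : ι → A) :
    f (weightedSumSquares A w v) = weightedSumSquares B w (f ∘ v) := by
  simp [weightedSumSquares_apply]

lemma weightedSumSquares_algebraMap [Algebra A B] [IsScalarTower S A B] (w : ι → S) :
    weightedSumSquares B (fun i ↦ algebraMap S A (w i)) = weightedSumSquares B w := by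
  ext v
  simp [weightedSumSquares_apply]

end WeightedSumSquares

section Springer

variable {F : Type*} [Field F] {σ τ : Type*} [Fintype σ] [Fintype τ]

lemma Polynomial.coeff_weightedSumSquares_two_mul {d : σ → F} {v : σ → F[X]} {D : ℕ}
    (hv : ∀ i, (v i).natDegree ≤ D) :
    (weightedSumSquares F[X] d v).coeff (2 * D) =
      weightedSumSquares F d fun i ↦ (v i).coeff D := by
  simp only [weightedSumSquares_apply, finsetSum_coeff, coeff_smul, smul_eq_mul, two_mul]
  exact Finset.sum_congr rfl fun i _ ↦ by rw [coeff_mul_add_eq_of_natDegree_le (hv i) (hv i)]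

lemma Polynomial.natDegree_weightedSumSquares_le {d : σ → F} {v : σ → F[X]} {D : ℕ}
    (hv : ∀ i, (v i).natDegree ≤ D) : (weightedSumSquares F[X] d v).natDegree ≤ 2 * D := by
  rw [weightedSumSquares_apply, two_mul]
  exact natDegree_sum_le_of_forall_le _ _ fun i _ ↦
    (natDegree_smul_le _ _).trans (natDegree_mul_le_of_le (hv i) (hv i))

/-- The coefficient of degree `2 D`, for `D` the largest degree of the `v i`, is the value of the
anisotropic form `⟨d⟩` on the top coefficients of the `v i`, hence nonzero. -/
lemma Polynomial.exists_natDegree_weightedSumSquares_eq {d : σ → F}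
    (hd : (weightedSumSquares F d).Anisotropic) {v : σ → F[X]} (hv : v ≠ 0) :
    ∃ D, weightedSumSquares F[X] d v ≠ 0 ∧ (weightedSumSquares F[X] d v).natDegree = 2 * D := by
  obtain ⟨i₀, -⟩ := Function.ne_iff.mp hv
  obtain ⟨i, -, hi⟩ :=
    Finset.univ.exists_max_image (fun j ↦ (v j).degree) ⟨i₀, Finset.mem_univ _⟩
  have hvi : v i ≠ 0 := fun h0 ↦ hv <| by
    ext1 j
    simpa [h0] using hi j (Finset.mem_univ j)
  have hle : ∀ j, (v j).natDegree ≤ (v i).natDegree :=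
    fun j ↦ natDegree_le_natDegree (hi j (Finset.mem_univ j))
  have hcoeff : (weightedSumSquares F[X] d v).coeff (2 * (v i).natDegree) ≠ 0 := by
    rw [coeff_weightedSumSquares_two_mul hle]
    exact fun h ↦ hvi (leadingCoeff_eq_zero.mp (congrFun (hd _ h) i))
  exact ⟨_, fun h ↦ hcoeff (by simp [h]),
    (natDegree_weightedSumSquares_le hle).antisymm (le_natDegree_of_ne_zero hcoeff)⟩

lemma Polynomial.anisotropic_weightedSumSquares {d : σ → F}
    (hd : (weightedSumSquares F d).Anisotropic) : (weightedSumSquares F[X] d).Anisotropic := by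
  intro v h
  by_contra hv
  obtain ⟨D, hne, -⟩ := exists_natDegree_weightedSumSquares_eq hd hv
  exact hne h

lemma Polynomial.even_natDegree_weightedSumSquares {d : σ → F}
    (hd : (weightedSumSquares F d).Anisotropic) (v : σ → F[X]) :
    Even (weightedSumSquares F[X] d v).natDegree := by
  by_cases hv : v = 0
  · simp [hv]
  · obtain ⟨D, -, hD⟩ := exists_natDegree_weightedSumSquares_eq hd hv
    exact ⟨D, by omega⟩

lemma Polynomial.eq_zero_of_weightedSumSquares_add_X_mul {d : σ → F} {e : τ → F}
    (hd : (weightedSumSquares F d).Anisotropic) (he : (weightedSumSquares F e).Anisotropic)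
    {v : σ → F[X]} {w : τ → F[X]}
    (h : weightedSumSquares F[X] d v + X * weightedSumSquares F[X] e w = 0) : v = 0 ∧ w = 0 := by
  have hw : weightedSumSquares F[X] e w = 0 := by
    by_contra hw
    have hdeg := congrArg natDegree (eq_neg_of_add_eq_zero_left h)
    rw [natDegree_neg, natDegree_X_mul hw] at hdeg
    have hv := even_natDegree_weightedSumSquares hd v
    rw [hdeg, Nat.even_add_one] at hv
    exact hv (even_natDegree_weightedSumSquares he w)
  rw [hw, mul_zero, add_zero] at h
  exact ⟨anisotropic_weightedSumSquares hd v h, anisotropic_weightedSumSquares he w hw⟩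

lemma RatFunc.eq_zero_of_weightedSumSquares_add_X_mul {d : σ → F} {e : τ → F}
    (hd : (weightedSumSquares F d).Anisotropic) (he : (weightedSumSquares F e).Anisotropic)
    {V : σ → RatFunc F} {W : τ → RatFunc F}
    (h : weightedSumSquares (RatFunc F) d V + X * weightedSumSquares (RatFunc F) e W = 0) :
    V = 0 ∧ W = 0 := by
  obtain ⟨b, hb⟩ :=
    IsLocalization.exist_integer_multiples_of_finite (nonZeroDivisors F[X]) (Sum.elim V W)
  choose u hu using hb
  let β := IsScalarTower.toAlgHom F F[X] (RatFunc F)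
  have hβ : β b ≠ 0 := RatFunc.algebraMap_ne_zero (nonZeroDivisors.coe_ne_zero b)
  have hu' : β ∘ u = β b • Sum.elim V W := funext fun s ↦ (hu s).trans (Algebra.smul_def _ _)
  have hpoly : weightedSumSquares F[X] d (u ∘ Sum.inl)
      + Polynomial.X * weightedSumSquares F[X] e (u ∘ Sum.inr) = 0 := by
    apply RatFunc.algebraMap_injective F
    have hV : β ∘ u ∘ Sum.inl = β b • V := by rw [← Function.comp_assoc, hu']; rfl
    have hW : β ∘ u ∘ Sum.inr = β b • W := by rw [← Function.comp_assoc, hu']; rfl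
    have hX : β Polynomial.X = X := RatFunc.algebraMap_X
    change β _ = _
    rw [map_add, map_mul, map_zero, β.map_weightedSumSquares, β.map_weightedSumSquares, hV, hW,
      QuadraticMap.map_smul, QuadraticMap.map_smul, hX, smul_eq_mul, smul_eq_mul]
    linear_combination β b * β b * h
  obtain ⟨hv, hw⟩ := Polynomial.eq_zero_of_weightedSumSquares_add_X_mul hd he hpoly
  have hβVW : β b • Sum.elim V W = 0 := by
    rw [← hu']
    ext (i | j)
    · simp [show u (Sum.inl i) = 0 from congrFun hv i]
    · simp [show u (Sum.inr j) = 0 from congrFun hw j]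
  have hVW := (smul_eq_zero.mp hβVW).resolve_left hβ
  exact ⟨funext fun i ↦ congrFun hVW (Sum.inl i), funext fun j ↦ congrFun hVW (Sum.inr j)⟩

lemma RatFunc.anisotropic_weightedSumSquares {d : σ → F}
    (hd : (weightedSumSquares F d).Anisotropic) :
    (weightedSumSquares (RatFunc F) d).Anisotropic :=
  fun V hV ↦ (eq_zero_of_weightedSumSquares_add_X_mul hd hd (W := 0) (by simp [hV])).1

end Springer

section RatFuncTower

variable (F : Type*) [Field F] {K : Type*} [Field K] [Algebra F K]

lemma RatFunc.fg_top_of_fg_top (h : (⊤ : IntermediateField F K).FG) :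
    (⊤ : IntermediateField F (RatFunc K)).FG := by
  rw [IntermediateField.fg_top_iff] at h ⊢
  have : Algebra.EssFiniteType K (RatFunc K) := IntermediateField.fg_top_iff.mp <|
    RatFunc.adjoin_X (K := K) ▸ IntermediateField.fg_adjoin_of_finite (Set.finite_singleton _)
  exact .comp F K (RatFunc K)

lemma RatFunc.not_isAlgebraic : ¬ Algebra.IsAlgebraic F (RatFunc K) := fun h ↦
  transcendental_X ((h.isAlgebraic X).extendScalars (algebraMap F K).injective)

end RatFuncTower

/-- `K = F(t₀, t₁, …, tₙ)` and `a_r = t_{r+1}`; the anisotropy of `⟨d⟩` over `K` is needed for the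
next induction step. -/
theorem exists_anisotropic_weightedSumSquares_tensor {F : Type u} [Field F] {ι : Type*}
    [Fintype ι] {d : ι → F} (hd : (weightedSumSquares F d).Anisotropic) (n : ℕ) :
    ∃ (K : Type u) (_ : Field K) (_ : Algebra F K), (⊤ : IntermediateField F K).FG ∧
      ¬ Algebra.IsAlgebraic F K ∧ (weightedSumSquares K d).Anisotropic ∧
      ∃ a : Fin n → Kˣ, (weightedSumSquares K
        fun p : Fin n × ι ↦ (a p.1 : K) * algebraMap F K (d p.2)).Anisotropic := by
  induction n with
  | zero =>
    refine ⟨RatFunc F, inferInstance, inferInstance,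
      RatFunc.fg_top_of_fg_top F (IntermediateField.fg_top F F), RatFunc.not_isAlgebraic F,
      RatFunc.anisotropic_weightedSumSquares hd, finZeroElim, ?_⟩
    exact fun v _ ↦ Subsingleton.elim v 0
  | succ n ih =>
    obtain ⟨K, _, _, hfg, -, hdK, a, ha⟩ := ih
    replace hdK : (weightedSumSquares K fun i ↦ algebraMap F K (d i)).Anisotropic := by
      rwa [weightedSumSquares_algebraMap (A := K) (B := K)]
    let a' : Fin (n + 1) → (RatFunc K)ˣ :=
      Fin.snoc (fun r ↦ Units.map (algebraMap K (RatFunc K)).toMonoidHom (a r))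
        (Units.mk0 RatFunc.X RatFunc.X_ne_zero)
    refine ⟨RatFunc K, inferInstance, inferInstance, RatFunc.fg_top_of_fg_top F hfg,
      RatFunc.not_isAlgebraic F, weightedSumSquares_algebraMap (A := K) (B := RatFunc K) d ▸
        RatFunc.anisotropic_weightedSumSquares hdK, a', ?_⟩
    intro v hv
    have hsplit : weightedSumSquares (RatFunc K)
          (fun p : Fin (n + 1) × ι ↦ (a' p.1 : RatFunc K) * algebraMap F (RatFunc K) (d p.2)) v =
        weightedSumSquares (RatFunc K) (fun p : Fin n × ι ↦ (a p.1 : K) * algebraMap F K (d p.2))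
          (fun p ↦ v (p.1.castSucc, p.2)) +
        RatFunc.X * weightedSumSquares (RatFunc K) (fun i ↦ algebraMap F K (d i))
          (fun i ↦ v (Fin.last n, i)) := by
      simp [weightedSumSquares_apply, Fintype.sum_prod_type, Fin.sum_univ_castSucc, a',
        Finset.mul_sum, Algebra.smul_def, IsScalarTower.algebraMap_apply F K (RatFunc K),
        mul_assoc]
    obtain ⟨h₁, h₂⟩ := RatFunc.eq_zero_of_weightedSumSquares_add_X_mul ha hdK (hsplit ▸ hv)
    ext ⟨r, i⟩
    induction r using Fin.lastCases with
    | last => exact congrFun h₂ i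
    | cast r => exact congrFun h₁ (r, i)

namespace QuaternionAlgebra

variable {R : Type*} [CommRing R]

def normFormWeights (c₁ c₂ : R) : Fin 4 → R := ![1, -c₁, -c₂, c₁ * c₂]

lemma map_normFormWeights {S : Type*} [CommRing S] (f : R →+* S) (c₁ c₂ : R) (i : Fin 4) :
    f (normFormWeights c₁ c₂ i) = normFormWeights (f c₁) (f c₂) i := by
  fin_cases i <;> simp [normFormWeights]

lemma mul_star_eq_weightedSumSquares {c₁ c₂ : R} (q : ℍ[R, c₁, c₂]) :
    q * star q = weightedSumSquares R (normFormWeights c₁ c₂) (linearEquivTuple c₁ 0 c₂ q) := by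
  rw [mul_star_eq_coe]
  congr 1
  simp only [re_mul, re_star, imI_star, imJ_star, imK_star, weightedSumSquares_apply,
    Fin.sum_univ_four, normFormWeights, coe_linearEquivTuple, equivTuple_apply, Matrix.cons_val,
    smul_eq_mul]
  ring

lemma anisotropic_normFormWeights {c₁ c₂ : R}
    (hdiv : ∀ x : ℍ[R, c₁, c₂], x ≠ 0 → IsUnit x) :
    (weightedSumSquares R (normFormWeights c₁ c₂)).Anisotropic := by
  intro v hv
  set q := (linearEquivTuple c₁ 0 c₂).symm v
  have hq : q * star q = 0 := by
    rw [mul_star_eq_weightedSumSquares, LinearEquiv.apply_symm_apply, hv, coe_zero]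
  suffices q = 0 from (LinearEquiv.map_eq_zero_iff _).mp this
  by_contra hne
  exact hne (star_eq_zero.mp ((hdiv q hne).mul_right_eq_zero.mp hq))

lemma eq_zero_of_sum_smul_mul_star_eq_zero {ι : Type*} [Fintype ι] {c₁ c₂ : R} {a : ι → R}
    (ha : (weightedSumSquares R
      fun p : ι × Fin 4 ↦ a p.1 * normFormWeights c₁ c₂ p.2).Anisotropic)
    {q : ι → ℍ[R, c₁, c₂]} (hq : ∑ r, a r • (q r * star (q r)) = 0) : q = 0 := by
  have hsum : ∑ r, a r • (q r * star (q r)) = weightedSumSquares R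
      (fun p : ι × Fin 4 ↦ a p.1 * normFormWeights c₁ c₂ p.2)
      (fun p ↦ linearEquivTuple c₁ 0 c₂ (q p.1) p.2) := by
    simp only [mul_star_eq_weightedSumSquares, smul_coe]
    simp only [← coe_algebraMap, ← map_sum]
    congr 1
    simp [weightedSumSquares_apply, Fintype.sum_prod_type, Finset.mul_sum, mul_assoc]
  have hzero := ha _ (coe_injective (hsum ▸ hq))
  ext r : 1
  exact (LinearEquiv.map_eq_zero_iff (linearEquivTuple c₁ 0 c₂)).mp
    (funext fun i ↦ congrFun hzero (r, i))

end QuaternionAlgebra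

theorem statement2_general {k : Type u} [Field k] (c₁ c₂ : k)
    -- `Q = (c₁,c₂)_k` is a division ring
    (hdiv : ∀ x : ℍ[k, c₁, c₂], x ≠ 0 → IsUnit x) (n : ℕ) :
    ∃ (K : Type u) (_ : Field K) (_ : Algebra k K),
      -- `k ⊆ K` is a finitely generated field extension
      (⊤ : IntermediateField k K).FG ∧
      -- which is transcendental (not algebraic)
      ¬ Algebra.IsAlgebraic k K ∧
      -- and there are units `a₁, …, aₙ` of `K` such that the hermitian form
      -- `b(q, q') = Σ_r a_r·q_r·conj(q'_r)` on `(Q_K)ⁿ` is anisotropic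
      ∃ a : Fin n → Kˣ,
        ∀ q : Fin n → ℍ[K, algebraMap k K c₁, algebraMap k K c₂],
          (∑ r, (a r : K) • (q r * star (q r))) = 0 → q = 0 := by
  obtain ⟨K, _, _, hfg, htr, -, a, ha⟩ :=
    exists_anisotropic_weightedSumSquares_tensor
      (QuaternionAlgebra.anisotropic_normFormWeights hdiv) n
  refine ⟨K, inferInstance, inferInstance, hfg, htr, a, fun q hq ↦ ?_⟩
  simp only [QuaternionAlgebra.map_normFormWeights] at ha
  exact QuaternionAlgebra.eq_zero_of_sum_smul_mul_star_eq_zero ha hq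

theorem statement2 {k : Type u} [Field k] (h2 : (2 : k) ≠ 0) (c₁ c₂ : k)
    (hc₁ : c₁ ≠ 0) (hc₂ : c₂ ≠ 0)
    -- `Q = (c₁,c₂)_k` is a division ring
    (hdiv : ∀ x : ℍ[k, c₁, c₂], x ≠ 0 → IsUnit x) (n : ℕ) :
    ∃ (K : Type u) (_ : Field K) (_ : Algebra k K),
      -- `k ⊆ K` is a finitely generated field extension
      (⊤ : IntermediateField k K).FG ∧
      -- which is transcendental (not algebraic)
      ¬ Algebra.IsAlgebraic k K ∧
      -- and there are units `a₁, …, aₙ` of `K` such that the hermitian form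
      -- `b(q, q') = Σ_r a_r·q_r·conj(q'_r)` on `(Q_K)ⁿ` is anisotropic
      ∃ a : Fin n → Kˣ,
        ∀ q : Fin n → ℍ[K, algebraMap k K c₁, algebraMap k K c₂],
          (∑ r, (a r : K) • (q r * star (q r))) = 0 → q = 0 :=
  statement2_general c₁ c₂ hdiv n
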